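/- arXiv:1812.03039 — 6 statements merged into one kernel-verified Lean document; each statement's English description precedes it below -/
import Mathlib

section
/- If a sequence of nonnegative reals a_n in [0,1] satisfies the recurrence a_{n+1} = sqrt(1 - a_n^2) - a_{n-1} and is 4-periodic, then a_1 = a_3 and a_2 = a_4. -/
theorem Real.sqrt_one_sub_sq_injOn : Set.InjOn (fun x : ℝ ↦ √(1 - x ^ 2)) (Set.Icc 0 1) := by
  intro x ⟨hx₀, hx₁⟩ y ⟨hy₀, hy₁⟩ h
  have hsq : 1 - x ^ 2 = 1 - y ^ 2 :=
    (Real.sqrt_inj (by nlinarith) (by nlinarith)).mp h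
  nlinarith

theorem sqrt_one_sub_sq_eq_of_periodic_four (a : ℤ → ℝ)
    (hrec : ∀ i, a (i + 1) = √(1 - a i ^ 2) - a (i - 1))
    (hper : ∀ i, a (i + 4) = a i) (i : ℤ) :
    √(1 - a i ^ 2) = √(1 - a (i + 2) ^ 2) := by
  have h₀ := hrec i
  have h₂ := hrec (i + 2)
  have h₄ := hper (i - 1)
  rw [show i + 2 + 1 = i - 1 + 4 by ring, show i + 2 - 1 = i + 1 by ring] at h₂
  linarith

theorem stmt_0 (a : ℤ → ℝ)
    (hbound : ∀ i, 0 ≤ a i ∧ a i ≤ 1)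
    (hrec : ∀ i, a (i + 1) = Real.sqrt (1 - (a i) ^ 2) - a (i - 1))
    (hper : ∀ i, a (i + 4) = a i) :
    a 1 = a 3 ∧ a 2 = a 4 := by
  have hstep (i : ℤ) : a i = a (i + 2) :=
    Real.sqrt_one_sub_sq_injOn (hbound i) (hbound (i + 2))
      (sqrt_one_sub_sq_eq_of_periodic_four a hrec hper i)
  exact ⟨hstep 1, hstep 2⟩
end

section
/- Let n ≥ 1 and let α_1,…,α_n, β_1,…,β_n ∈ [0, π/2] satisfy cos α_i + cos α_{i+1} = cos β_i and sin β_{i-1} + sin β_i = sin α_i for all i (indices mod n). Then S := (1/2)·( (α_1 - β_1) + (α_2 - β_1) + (α_2 - β_2) + … + (α_1 - β_n) ) = Σ α_i − Σ β_i satisfies S ≥ n/4. -/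
/-!
From `cos β_i = cos α_i + cos α_{i+1} ≥ cos α_i` we get `β_i ≤ α_i`, so since `sin` and `cos` are
1-Lipschitz, `2 (Σ α - Σ β) ≥ (Σ sin α - Σ sin β) + (Σ cos β - Σ cos α)`. Summing the recurrences
over a period gives `Σ cos β = 2 Σ cos α` and `Σ sin β = Σ sin α / 2`, so the right-hand side is
`Σ (cos α_i + sin α_i / 2) ≥ n / 2`.
-/

open Finset Real

theorem Function.Periodic.sum_range_comp_add_one {M : Type*} [AddCommGroup M] {f : ℤ → M}
    {n : ℕ} (hf : Function.Periodic f n) :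
    ∑ i ∈ range n, f (i + 1) = ∑ i ∈ range n, f i := by
  have h := (sum_range_succ' (fun i : ℕ => f i) n).symm.trans (sum_range_succ _ n)
  push_cast at h
  rwa [← zero_add (n : ℤ), hf, add_left_inj] at h

theorem Function.Periodic.sum_range_comp_sub_one {M : Type*} [AddCommGroup M] {f : ℤ → M}
    {n : ℕ} (hf : Function.Periodic f n) :
    ∑ i ∈ range n, f (i - 1) = ∑ i ∈ range n, f i := by
  simpa using ((hf.sub_const 1).sum_range_comp_add_one).symm

theorem Real.le_of_cos_le_cos {x y : ℝ} (hx : x ∈ Set.Icc 0 π) (hy : y ∈ Set.Icc 0 π)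
    (h : cos x ≤ cos y) : y ≤ x :=
  (strictAntiOn_cos.le_iff_ge hx hy).1 h

theorem Real.sin_sub_sin_le_sub {x y : ℝ} (h : y ≤ x) : sin x - sin y ≤ x - y := by
  simpa [abs_of_nonneg (sub_nonneg.2 h)] using (le_abs_self _).trans (abs_sin_sub_sin_le x y)

theorem Real.cos_sub_cos_le_sub {x y : ℝ} (h : y ≤ x) : cos y - cos x ≤ x - y := by
  have := (le_abs_self _).trans (abs_cos_sub_cos_le y x)
  rwa [abs_sub_comm, abs_of_nonneg (sub_nonneg.2 h)] at this

theorem Real.one_half_le_cos_add_sin_div_two {x : ℝ} (hx : x ∈ Set.Icc 0 (π / 2)) :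
    1 / 2 ≤ cos x + sin x / 2 := by
  have hcos := cos_nonneg_of_mem_Icc ⟨by linarith [hx.1, pi_pos], hx.2⟩
  have hsin := sin_nonneg_of_nonneg_of_le_pi hx.1 (by linarith [hx.2, pi_pos])
  nlinarith [sin_sq_add_cos_sq x, sin_le_one x, cos_le_one x]

theorem stmt_4_general (n : ℕ) (α β : ℤ → ℝ)
    (hαper : ∀ i, α (i + n) = α i) (hβper : ∀ i, β (i + n) = β i)
    (hα : ∀ i, α i ∈ Set.Icc 0 (Real.pi / 2)) (hβ : ∀ i, β i ∈ Set.Icc 0 (Real.pi / 2))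
    (hc : ∀ i, Real.cos (α i) + Real.cos (α (i + 1)) = Real.cos (β i))
    (hs : ∀ i, Real.sin (β (i - 1)) + Real.sin (β i) = Real.sin (α i)) :
    ∑ i ∈ Finset.range n, α i - ∑ i ∈ Finset.range n, β i ≥ n / 4 := by
  have hIcc : ∀ {x}, x ∈ Set.Icc 0 (π / 2) → x ∈ Set.Icc 0 π :=
    fun hx => ⟨hx.1, hx.2.trans (by linarith [pi_pos])⟩
  have hβα : ∀ i, β i ≤ α i := fun i =>
    le_of_cos_le_cos (hIcc (hα i)) (hIcc (hβ i)) <| by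
      linarith [hc i, cos_nonneg_of_mem_Icc ⟨by linarith [(hα (i + 1)).1, pi_pos], (hα (i + 1)).2⟩]
  have hcos_per : Function.Periodic (fun i => cos (α i)) n := fun i => congrArg cos (hαper i)
  have hsin_per : Function.Periodic (fun i => sin (β i)) n := fun i => congrArg sin (hβper i)
  have hcos : 2 * ∑ i ∈ range n, cos (α i) = ∑ i ∈ range n, cos (β i) := by
    rw [← sum_congr rfl fun (i : ℕ) _ => hc i, sum_add_distrib,
      hcos_per.sum_range_comp_add_one, two_mul]
  have hsin : 2 * ∑ i ∈ range n, sin (β i) = ∑ i ∈ range n, sin (α i) := by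
    rw [← sum_congr rfl fun (i : ℕ) _ => hs i, sum_add_distrib,
      hsin_per.sum_range_comp_sub_one, two_mul]
  have hsin_le : ∑ i ∈ range n, (sin (α i) - sin (β i)) ≤ ∑ i ∈ range n, (α i - β i) :=
    sum_le_sum fun i _ => sin_sub_sin_le_sub (hβα i)
  have hcos_le : ∑ i ∈ range n, (cos (β i) - cos (α i)) ≤ ∑ i ∈ range n, (α i - β i) :=
    sum_le_sum fun i _ => cos_sub_cos_le_sub (hβα i)
  have hhalf : ∑ _i ∈ range n, (1 / 2 : ℝ) ≤ ∑ i ∈ range n, (cos (α i) + sin (α i) / 2) :=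
    sum_le_sum fun i _ => one_half_le_cos_add_sin_div_two (hα i)
  simp only [sum_sub_distrib, sum_add_distrib, ← sum_div, sum_const, card_range,
    nsmul_eq_mul] at hsin_le hcos_le hhalf
  linarith

theorem stmt_4 (n : ℕ) (hn : 1 ≤ n) (α β : ℤ → ℝ)
    (hαper : ∀ i, α (i + n) = α i) (hβper : ∀ i, β (i + n) = β i)
    (hα : ∀ i, α i ∈ Set.Icc 0 (Real.pi / 2)) (hβ : ∀ i, β i ∈ Set.Icc 0 (Real.pi / 2))
    (hc : ∀ i, Real.cos (α i) + Real.cos (α (i + 1)) = Real.cos (β i))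
    (hs : ∀ i, Real.sin (β (i - 1)) + Real.sin (β i) = Real.sin (α i)) :
    ∑ i ∈ Finset.range n, α i - ∑ i ∈ Finset.range n, β i ≥ n / 4 :=
  stmt_4_general n α β hαper hβper hα hβ hc hs
end

section
/- For convex bodies K ⊂ ℝ^n with polar K°, the ℓ₂-sum X = {(p,q) ∈ ℝ^n × ℝ^n : ‖p‖_{K°}^2 + ‖q‖_K^2 ≤ 1} satisfies Γ(n+1)·vol(X) = Γ(n/2+1)^2 · vol(K°)·vol(K), i.e. vol(K°)·vol(K) = binom(n, n/2)·vol(X) with the binomial coefficient defined via Γ. -/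
open MeasureTheory

/-- The polar body of a set in Euclidean space. -/
def polarBody {n : ℕ} (K : Set (EuclideanSpace ℝ (Fin n))) : Set (EuclideanSpace ℝ (Fin n)) :=
  {p | ∀ q ∈ K, (inner ℝ p q : ℝ) ≤ 1}

namespace Stmt10Aux

open Set Metric

abbrev Esp (n : ℕ) := EuclideanSpace ℝ (Fin n)

variable {n : ℕ} {K : Set (EuclideanSpace ℝ (Fin n))}

lemma gauge_smul_abs {V : Type*} [AddCommGroup V] [Module ℝ V]
    {s : Set V} (hsymm : ∀ x ∈ s, -x ∈ s) (r : ℝ) (x : V) :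
    gauge s (r • x) = |r| * gauge s x := by
  rcases le_or_gt 0 r with h | h
  · rw [gauge_smul_of_nonneg h, smul_eq_mul, abs_of_nonneg h]
  · have : r • x = -((-r) • x) := by simp
    rw [this, gauge_neg hsymm, gauge_smul_of_nonneg (by linarith), smul_eq_mul,
      abs_of_neg h]

lemma body_volume_eq {C : Set (EuclideanSpace ℝ (Fin n))} (hc : Convex ℝ C)
    (h0 : C ∈ nhds 0) :
    volume {x : EuclideanSpace ℝ (Fin n) | gauge C x < 1} = volume C := by
  rw [gauge_lt_one_eq_interior hc h0]
  refine le_antisymm (measure_mono interior_subset) ?_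
  calc volume C ≤ volume (closure C) := measure_mono subset_closure
    _ ≤ volume (interior C ∪ frontier C) := by
        refine measure_mono ?_
        rw [← closure_eq_interior_union_frontier]
    _ ≤ volume (interior C) + volume (frontier C) := measure_union_le _ _
    _ = volume (interior C) := by rw [hc.addHaar_frontier volume, add_zero]

lemma body_integral {C : Set (EuclideanSpace ℝ (Fin n))} (hc : Convex ℝ C)
    (hb : Bornology.IsBounded C) (h0 : 0 ∈ interior C) (hsymm : ∀ x ∈ C, -x ∈ C) :
    ∫ x : EuclideanSpace ℝ (Fin n), Real.exp (-(gauge C x ^ (2:ℝ)))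
      = Real.Gamma ((n : ℝ) / 2 + 1) * (volume C).toReal := by
  have hn0 : C ∈ nhds 0 := mem_interior_iff_mem_nhds.mp h0
  have ha : Absorbent ℝ C := absorbent_nhds_zero hn0
  have hvb : Bornology.IsVonNBounded ℝ C := NormedSpace.isVonNBounded_iff ℝ |>.mpr hb
  have key := measure_lt_one_eq_integral_div_gamma (volume : Measure (EuclideanSpace ℝ (Fin n)))
    gauge_zero (gauge_neg hsymm) (gauge_add_le hc ha)
    (fun hx => (gauge_eq_zero ha hvb).mp hx)
    (fun r x => le_of_eq (gauge_smul_abs hsymm r x)) (p := 2) two_pos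
  rw [body_volume_eq hc hn0, finrank_euclideanSpace_fin] at key
  have hΓ : 0 < Real.Gamma ((n : ℝ) / 2 + 1) := Real.Gamma_pos_of_pos (by positivity)
  have hI : 0 ≤ ∫ x : EuclideanSpace ℝ (Fin n), Real.exp (-(gauge C x ^ (2:ℝ))) :=
    integral_nonneg fun x => (Real.exp_pos _).le
  have := congrArg ENNReal.toReal key
  rw [ENNReal.toReal_ofReal (by positivity)] at this
  rw [this]
  field_simp

lemma polar_convex : Convex ℝ (polarBody K) := by
  intro p₁ h₁ p₂ h₂ a b ha hb hab q hq
  have := h₁ q hq; have := h₂ q hq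
  rw [inner_add_left, real_inner_smul_left, real_inner_smul_left]
  nlinarith

lemma polar_symm (hsymm : ∀ x ∈ K, -x ∈ K) : ∀ p ∈ polarBody K, -p ∈ polarBody K := by
  intro p hp q hq
  have := hp (-q) (hsymm q hq)
  rwa [inner_neg_left, ← inner_neg_right]

lemma polar_bounded (h0 : 0 ∈ interior K) : Bornology.IsBounded (polarBody K) := by
  obtain ⟨ε, hε, hball⟩ := Metric.isOpen_iff.mp isOpen_interior 0 h0
  refine (Metric.isBounded_iff_subset_closedBall 0).mpr ⟨2 / ε, fun p hp => ?_⟩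
  rcases eq_or_ne p 0 with rfl | hne
  · simp [le_of_lt, div_pos, hε]
  · have hpn : 0 < ‖p‖ := norm_pos_iff.mpr hne
    have hq : (ε / 2 / ‖p‖) • p ∈ K := by
      apply interior_subset; apply hball
      rw [Metric.mem_ball, dist_zero_right, norm_smul, Real.norm_eq_abs,
        abs_of_pos (by positivity), div_mul_cancel₀ _ (norm_ne_zero_iff.mpr hne)]
      linarith
    have h1 := hp _ hq
    rw [real_inner_smul_right, real_inner_self_eq_norm_sq] at h1
    rw [mem_closedBall, dist_zero_right, le_div_iff₀ hε]
    have hd : 0 < ε / 2 / ‖p‖ := by positivity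
    have h2 : ε / 2 / ‖p‖ * ‖p‖ ^ 2 = ε / 2 * ‖p‖ := by
      field_simp
    rw [h2] at h1
    nlinarith

lemma polar_zero_mem_interior (hcomp : IsCompact K) (h0 : 0 ∈ interior K) :
    0 ∈ interior (polarBody K) := by
  obtain ⟨R, hR⟩ := hcomp.isBounded.subset_closedBall 0
  have hR0 : (0:ℝ) ≤ R := by
    have := hR (interior_subset h0)
    simpa using this
  have hsub : Metric.ball (0 : EuclideanSpace ℝ (Fin n)) (1 / (R + 1)) ⊆ polarBody K := by
    intro p hp q hq
    rw [Metric.mem_ball, dist_zero_right] at hp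
    have hq' : ‖q‖ ≤ R := by simpa using hR hq
    calc (inner ℝ p q : ℝ) ≤ ‖p‖ * ‖q‖ := real_inner_le_norm p q
      _ ≤ 1 := by
          have h1 : ‖p‖ * ‖q‖ ≤ (1 / (R + 1)) * R := by
            apply mul_le_mul hp.le hq' (norm_nonneg _) (by positivity)
          have : (1 / (R + 1)) * R ≤ 1 := by
            rw [div_mul_eq_mul_div, one_mul, div_le_one (by linarith)]; linarith
          linarith
  apply interior_mono hsub
  rw [Metric.isOpen_ball.interior_eq]
  exact Metric.mem_ball_self (by positivity)

lemma euclid_triangle {a b c d : ℝ} (ha : 0 ≤ a) (hb : 0 ≤ b) (hc : 0 ≤ c) (hd : 0 ≤ d) :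
    Real.sqrt ((a + c) ^ 2 + (b + d) ^ 2)
      ≤ Real.sqrt (a ^ 2 + b ^ 2) + Real.sqrt (c ^ 2 + d ^ 2) := by
  set s₁ := Real.sqrt (a ^ 2 + b ^ 2) with hs₁
  set s₂ := Real.sqrt (c ^ 2 + d ^ 2) with hs₂
  have h₁ : s₁ ^ 2 = a ^ 2 + b ^ 2 := Real.sq_sqrt (by positivity)
  have h₂ : s₂ ^ 2 = c ^ 2 + d ^ 2 := Real.sq_sqrt (by positivity)
  have hs₁0 : 0 ≤ s₁ := Real.sqrt_nonneg _
  have hs₂0 : 0 ≤ s₂ := Real.sqrt_nonneg _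
  have hcs : a * c + b * d ≤ s₁ * s₂ := by
    nlinarith [sq_nonneg (a * d - b * c), sq_nonneg (s₁ * s₂ - a * c - b * d),
      mul_nonneg hs₁0 hs₂0, mul_nonneg (mul_nonneg ha hc) (mul_nonneg hb hd)]
  rw [show Real.sqrt ((a + c) ^ 2 + (b + d) ^ 2) ≤ s₁ + s₂ ↔ _ from
    Iff.rfl]
  rw [← Real.sqrt_sq (by positivity : (0:ℝ) ≤ s₁ + s₂)]
  apply Real.sqrt_le_sqrt
  nlinarith

end Stmt10Aux

open Stmt10Aux in
theorem stmt_10 (n : ℕ) (K : Set (EuclideanSpace ℝ (Fin n)))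
    (hconv : Convex ℝ K) (hcomp : IsCompact K) (h0 : 0 ∈ interior K)
    (hsymm : ∀ x ∈ K, -x ∈ K) :
    Real.Gamma (n + 1) *
      (volume {pq : EuclideanSpace ℝ (Fin n) × EuclideanSpace ℝ (Fin n) |
        gauge (polarBody K) pq.1 ^ 2 + gauge K pq.2 ^ 2 ≤ 1}).toReal
    = Real.Gamma ((n : ℝ) / 2 + 1) ^ 2 * (volume (polarBody K)).toReal * (volume K).toReal := by
  classical
  -- properties of the polar body
  have hconv' : Convex ℝ (polarBody K) := polar_convex
  have hb' : Bornology.IsBounded (polarBody K) := polar_bounded h0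
  have h0' : 0 ∈ interior (polarBody K) := polar_zero_mem_interior hcomp h0
  have hsymm' : ∀ x ∈ polarBody K, -x ∈ polarBody K := polar_symm hsymm
  have hbK : Bornology.IsBounded K := hcomp.isBounded
  have haK : Absorbent ℝ K := absorbent_nhds_zero (mem_interior_iff_mem_nhds.mp h0)
  have haP : Absorbent ℝ (polarBody K) :=
    absorbent_nhds_zero (mem_interior_iff_mem_nhds.mp h0')
  have hvbK : Bornology.IsVonNBounded ℝ K := NormedSpace.isVonNBounded_iff ℝ |>.mpr hbK
  have hvbP : Bornology.IsVonNBounded ℝ (polarBody K) :=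
    NormedSpace.isVonNBounded_iff ℝ |>.mpr hb'
  set g : Esp n × Esp n → ℝ := fun x => Real.sqrt (gauge (polarBody K) x.1 ^ 2 + gauge K x.2 ^ 2) with hg_def
  have hg1 : g 0 = 0 := by simp [hg_def, gauge_zero]
  have hg2 : ∀ x, g (-x) = g x := by
    intro x
    simp only [hg_def, Prod.fst_neg, Prod.snd_neg]
    rw [gauge_neg hsymm', gauge_neg hsymm]
  have hg3 : ∀ x y, g (x + y) ≤ g x + g y := by
    intro x y
    have t₁ : gauge (polarBody K) (x.1 + y.1) ≤ gauge (polarBody K) x.1 + gauge (polarBody K) y.1 := gauge_add_le hconv' haP _ _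
    have t₂ : gauge K (x.2 + y.2) ≤ gauge K x.2 + gauge K y.2 := gauge_add_le hconv haK _ _
    calc g (x + y) = Real.sqrt (gauge (polarBody K) (x.1 + y.1) ^ 2 + gauge K (x.2 + y.2) ^ 2) := rfl
      _ ≤ Real.sqrt ((gauge (polarBody K) x.1 + gauge (polarBody K) y.1) ^ 2 + (gauge K x.2 + gauge K y.2) ^ 2) := by
          apply Real.sqrt_le_sqrt
          gcongr <;> exact gauge_nonneg _
      _ ≤ g x + g y :=
          euclid_triangle (gauge_nonneg _) (gauge_nonneg _) (gauge_nonneg _) (gauge_nonneg _)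
  have hg4 : ∀ {x}, g x = 0 → x = 0 := by
    intro x hx
    rw [hg_def] at hx
    have hsum : gauge (polarBody K) x.1 ^ 2 + gauge K x.2 ^ 2 = 0 := by
      have h := Real.sqrt_eq_zero'.mp hx
      nlinarith [sq_nonneg (gauge (polarBody K) x.1), sq_nonneg (gauge K x.2)]
    have h₁ : gauge (polarBody K) x.1 = 0 := by nlinarith [sq_nonneg (gauge (polarBody K) x.1), sq_nonneg (gauge K x.2)]
    have h₂ : gauge K x.2 = 0 := by nlinarith [sq_nonneg (gauge (polarBody K) x.1), sq_nonneg (gauge K x.2)]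
    have e₁ : x.1 = 0 := (gauge_eq_zero haP hvbP).mp h₁
    have e₂ : x.2 = 0 := (gauge_eq_zero haK hvbK).mp h₂
    exact Prod.ext e₁ e₂
  have hg5 : ∀ (r : ℝ) x, g (r • x) = |r| * g x := by
    intro r x
    simp only [hg_def, Prod.smul_fst, Prod.smul_snd]
    rw [gauge_smul_abs hsymm' r x.1, gauge_smul_abs hsymm r x.2]
    rw [mul_pow, mul_pow, ← mul_add, Real.sqrt_mul (by positivity),
      Real.sqrt_sq_eq_abs, abs_abs]
  -- the main formula on the product space
  haveI : (volume : Measure (Esp n × Esp n)).IsAddHaarMeasure :=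
    MeasureTheory.Measure.prod.instIsAddHaarMeasure volume volume
  have key := measure_lt_one_eq_integral_div_gamma (volume : Measure (Esp n × Esp n))
    hg1 hg2 hg3 (fun hx => hg4 hx) (fun r x => le_of_eq (hg5 r x)) (p := 2) two_pos
  have hfr : Module.finrank ℝ (Esp n × Esp n) = n + n := by
    rw [Module.finrank_prod, finrank_euclideanSpace_fin]
  rw [hfr] at key
  -- identify the measure of the set in the statement with the open gauge ball
  set X := {pq : Esp n × Esp n | gauge (polarBody K) pq.1 ^ 2 + gauge K pq.2 ^ 2 ≤ 1} with hX_def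
  have hXg : X = {x : Esp n × Esp n | g x ≤ 1} := by
    ext x
    simp only [hX_def, Set.mem_setOf_eq, hg_def]
    constructor
    · intro h
      rw [show (1:ℝ) = Real.sqrt 1 by simp]
      exact Real.sqrt_le_sqrt h
    · intro h
      have := Real.sq_sqrt (by positivity : (0:ℝ) ≤ gauge (polarBody K) x.1 ^ 2 + gauge K x.2 ^ 2)
      nlinarith [Real.sqrt_nonneg (gauge (polarBody K) x.1 ^ 2 + gauge K x.2 ^ 2)]
  have hlt : {x : Esp n × Esp n | g x < 1} = {pq : Esp n × Esp n | gauge (polarBody K) pq.1 ^ 2 + gauge K pq.2 ^ 2 < 1} := by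
    ext x
    simp only [Set.mem_setOf_eq, hg_def]
    rw [Real.sqrt_lt' one_pos, one_pow]
  -- X is convex
  have hXconv : Convex ℝ X := by
    rw [hXg]
    intro x hx y hy a b ha hb hab
    simp only [Set.mem_setOf_eq] at *
    calc g (a • x + b • y) ≤ g (a • x) + g (b • y) := hg3 _ _
      _ = |a| * g x + |b| * g y := by rw [hg5, hg5]
      _ ≤ a * 1 + b * 1 := by
          rw [abs_of_nonneg ha, abs_of_nonneg hb]
          exact add_le_add (mul_le_mul_of_nonneg_left hx ha)
            (mul_le_mul_of_nonneg_left hy hb)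
      _ = 1 := by linarith
  -- the sphere has measure zero
  have hsphere : volume {x : Esp n × Esp n | g x = 1} ≤ volume (frontier X) := by
    apply measure_mono
    intro x hx
    simp only [Set.mem_setOf_eq] at hx
    constructor
    · apply subset_closure
      rw [hXg]; exact le_of_eq hx
    · intro hin
      rw [hXg] at hin
      have hcont : Continuous fun t : ℝ => t • x := continuous_id.smul continuous_const
      have hopen : IsOpen ((fun t : ℝ => t • x) ⁻¹' interior {x : Esp n × Esp n | g x ≤ 1}) :=
        isOpen_interior.preimage hcont
      have h1m : (1:ℝ) ∈ (fun t : ℝ => t • x) ⁻¹' interior {x : Esp n × Esp n | g x ≤ 1} := by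
        simpa using hin
      obtain ⟨ε, hε, hball⟩ := Metric.isOpen_iff.mp hopen 1 h1m
      have ht : (1 + ε/2) • x ∈ interior {x : Esp n × Esp n | g x ≤ 1} := by
        apply hball
        rw [Metric.mem_ball, Real.dist_eq, add_sub_cancel_left,
          abs_of_pos (by linarith)]
        linarith
      have := interior_subset ht
      simp only [Set.mem_setOf_eq] at this
      rw [hg5, hx, mul_one, abs_of_pos (by linarith)] at this
      linarith
  have hsphere0 : volume {x : Esp n × Esp n | g x = 1} = 0 :=
    le_antisymm (hsphere.trans (le_of_eq (hXconv.addHaar_frontier volume))) zero_le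
  have hvol : volume X = volume {x : Esp n × Esp n | g x < 1} := by
    refine le_antisymm ?_ (measure_mono (by
      rw [hXg]
      intro x hx
      simp only [Set.mem_setOf_eq] at *
      exact le_of_lt hx))
    calc volume X ≤ volume ({x : Esp n × Esp n | g x < 1} ∪ {x : Esp n × Esp n | g x = 1}) := by
          apply measure_mono
          rw [hXg]
          intro x hx
          simp only [Set.mem_setOf_eq] at hx ⊢
          rcases lt_or_eq_of_le hx with h | h
          · exact Or.inl h
          · exact Or.inr h
      _ ≤ volume {x : Esp n × Esp n | g x < 1} + volume {x : Esp n × Esp n | g x = 1} := measure_union_le _ _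
      _ = volume {x : Esp n × Esp n | g x < 1} := by rw [hsphere0, add_zero]
  -- compute the integral via Fubini
  have hexp : ∀ x : Esp n × Esp n, Real.exp (-(g x ^ (2:ℝ)))
      = Real.exp (-(gauge (polarBody K) x.1 ^ (2:ℝ))) * Real.exp (-(gauge K x.2 ^ (2:ℝ))) := by
    intro x
    rw [← Real.exp_add, ← neg_add]
    congr 1
    have h2 : (2:ℝ) = ((2:ℕ):ℝ) := by norm_num
    rw [h2, Real.rpow_natCast, Real.rpow_natCast, Real.rpow_natCast]
    simp only [hg_def]
    rw [Real.sq_sqrt (by positivity)]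
  have hint : ∫ x : Esp n × Esp n, Real.exp (-(g x ^ (2:ℝ)))
      = (∫ p : Esp n, Real.exp (-(gauge (polarBody K) p ^ (2:ℝ)))) * ∫ q : Esp n, Real.exp (-(gauge K q ^ (2:ℝ))) := by
    simp_rw [hexp]
    rw [MeasureTheory.Measure.volume_eq_prod]
    exact integral_prod_mul (μ := volume) (ν := volume)
      (f := fun p : Esp n => Real.exp (-(gauge (polarBody K) p ^ (2:ℝ))))
      (g := fun q : Esp n => Real.exp (-(gauge K q ^ (2:ℝ))))
  have hI₁ := body_integral hconv' hb' h0' hsymm'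
  have hI₂ := body_integral hconv hbK h0 hsymm
  rw [hI₁, hI₂] at hint
  -- put everything together
  have hcast : ((n + n : ℕ) : ℝ) / 2 + 1 = (n : ℝ) + 1 := by push_cast; ring
  rw [hcast] at key
  rw [← hvol, hint] at key
  have hΓ : 0 < Real.Gamma ((n : ℝ) + 1) := Real.Gamma_pos_of_pos (by positivity)
  have hΓ' : 0 < Real.Gamma ((n : ℝ) / 2 + 1) := Real.Gamma_pos_of_pos (by positivity)
  have hv1 : (0:ℝ) ≤ (volume (polarBody K)).toReal := ENNReal.toReal_nonneg
  have hv2 : (0:ℝ) ≤ (volume K).toReal := ENNReal.toReal_nonneg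
  have := congrArg ENNReal.toReal key
  rw [ENNReal.toReal_ofReal (by positivity)] at this
  rw [show (volume {pq : Esp n × Esp n | gauge (polarBody K) pq.1 ^ 2 + gauge K pq.2 ^ 2 ≤ 1}) = volume X
    from rfl, this]
  field_simp
end

section
/- For every positive integer n, n! / ((n/2)!)² ≤ 2^n / √(π n / 2), where (n/2)! denotes Γ(n/2 + 1). -/
/-!
Legendre's duplication formula at `s = (n + 1) / 2` gives
`n! √π = 2ⁿ Γ((n + 1) / 2) Γ(n / 2 + 1)`, so the left-hand side equals
`2ⁿ Γ((n + 1) / 2) / (√π Γ(n / 2 + 1))`. Log-convexity of `Γ` between `x` and `x + 1`,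
together with `Γ(x + 1) = x Γ(x)`, bounds the ratio `Γ(x + 1/2) / Γ(x + 1)` by `1 / √x`;
take `x = n / 2`.
-/

open Real Nat

theorem Real.Gamma_add_half_mul_sqrt_le_Gamma_add_one {x : ℝ} (hx : 0 < x) :
    Gamma (x + 1 / 2) * √x ≤ Gamma (x + 1) := by
  have hΓ : 0 < Gamma (x + 1) := Gamma_pos_of_pos (by linarith)
  have hlogconv : Gamma (x + 1 / 2) ≤ √(Gamma x) * √(Gamma (x + 1)) := by
    simpa only [sqrt_eq_rpow, (by ring : 1 / 2 * x + 1 / 2 * (x + 1) = x + 1 / 2)] using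
      Gamma_mul_add_mul_le_rpow_Gamma_mul_rpow_Gamma hx (by linarith : 0 < x + 1)
        one_half_pos one_half_pos (add_halves 1)
  calc Gamma (x + 1 / 2) * √x ≤ √(Gamma x) * √(Gamma (x + 1)) * √x := by gcongr
    _ = √(Gamma (x + 1) / x) * √x * √(Gamma (x + 1)) := by
        rw [Gamma_add_one hx.ne', mul_div_cancel_left₀ _ hx.ne']; ring
    _ = Gamma (x + 1) := by
        rw [← sqrt_mul (div_nonneg hΓ.le hx.le), div_mul_cancel₀ _ hx.ne',
          mul_self_sqrt hΓ.le]

theorem Real.factorial_mul_sqrt_pi_eq_two_pow_mul_Gamma_mul_Gamma (n : ℕ) :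
    (n ! : ℝ) * √π = 2 ^ n * Gamma ((n + 1) / 2) * Gamma (n / 2 + 1) := by
  have h := Gamma_mul_Gamma_add_half (((n : ℝ) + 1) / 2)
  rw [(by ring : ((n : ℝ) + 1) / 2 + 1 / 2 = n / 2 + 1),
    (by ring : 2 * (((n : ℝ) + 1) / 2) = n + 1),
    Gamma_nat_eq_factorial, (by ring : 1 - ((n : ℝ) + 1) = -n), rpow_neg zero_le_two,
    rpow_natCast] at h
  rw [mul_assoc, h]
  field_simp

theorem stmt_12 (n : ℕ) (hn : 0 < n) :
    (Nat.factorial n : ℝ) / Real.Gamma ((n : ℝ) / 2 + 1) ^ 2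
      ≤ 2 ^ n / Real.sqrt (Real.pi * n / 2) := by
  have hx : (0 : ℝ) < n / 2 := by positivity
  rw [div_le_div_iff₀ (by positivity) (sqrt_pos.2 (by positivity)),
    mul_div_assoc, sqrt_mul pi_pos.le, ← mul_assoc,
    factorial_mul_sqrt_pi_eq_two_pow_mul_Gamma_mul_Gamma]
  calc 2 ^ n * Gamma ((n + 1) / 2) * Gamma (n / 2 + 1) * √(n / 2)
      = 2 ^ n * Gamma (n / 2 + 1) * (Gamma (n / 2 + 1 / 2) * √(n / 2)) := by ring_nf
    _ ≤ 2 ^ n * Gamma (n / 2 + 1) * Gamma (n / 2 + 1) := by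
        gcongr; exact Gamma_add_half_mul_sqrt_le_Gamma_add_one hx
    _ = 2 ^ n * Gamma (n / 2 + 1) ^ 2 := by ring
end

section
/- For every even integer x = 2n ≥ 10, (π/4)^(1/x) · x^(1/x) ≥ 1 + 1/x + (2/3)·(π/4)^(3/x) · x^(3/x) / x². -/
theorem stmt_13 (n : ℕ) (hn : 5 ≤ n) (x : ℝ) (hx : x = 2 * n) :
    (Real.pi / 4) ^ (1 / x) * x ^ (1 / x)
      ≥ 1 + 1 / x + (2 / 3) * (Real.pi / 4) ^ (3 / x) * x ^ (3 / x) / x ^ 2 := by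
  have hpi := Real.pi_gt_three
  have hpi4 := Real.pi_lt_d2
  have hx10 : (10:ℝ) ≤ x := by
    rw [hx]
    have : (5:ℝ) ≤ n := by exact_mod_cast hn
    linarith
  have hxpos : (0:ℝ) < x := by linarith
  have hq : (0:ℝ) < Real.pi / 4 := by linarith
  have hL : Real.log (Real.pi / 4) + Real.log x = Real.log (Real.pi / 4 * x) :=
    (Real.log_mul (ne_of_gt hq) (ne_of_gt hxpos)).symm
  set L : ℝ := Real.log (Real.pi / 4) + Real.log x with hLdef
  have h1 : (Real.pi / 4) ^ (1 / x) * x ^ (1 / x) = Real.exp (L / x) := by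
    rw [Real.rpow_def_of_pos hq, Real.rpow_def_of_pos hxpos, ← Real.exp_add]
    congr 1
    rw [hLdef]
    field_simp
  have h3 : (Real.pi / 4) ^ (3 / x) * x ^ (3 / x) = Real.exp (3 * (L / x)) := by
    rw [Real.rpow_def_of_pos hq, Real.rpow_def_of_pos hxpos, ← Real.exp_add]
    congr 1
    rw [hLdef]
    field_simp
  -- L ≤ log x
  have hq1 : Real.pi / 4 ≤ 1 := by linarith
  have hLlogx : L ≤ Real.log x := by
    have : Real.log (Real.pi / 4) ≤ 0 := Real.log_nonpos (le_of_lt hq) hq1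
    rw [hLdef]; linarith
  have hlogx0 : 0 ≤ Real.log x := Real.log_nonneg (by linarith)
  -- exp(3t) ≤ x
  have h3t : 3 * (L / x) ≤ Real.log x := by
    rw [mul_div_assoc', div_le_iff₀ hxpos]
    nlinarith
  have hexp3 : Real.exp (3 * (L / x)) ≤ x := by
    calc Real.exp (3 * (L / x)) ≤ Real.exp (Real.log x) := Real.exp_le_exp.2 h3t
    _ = x := Real.exp_log hxpos
  -- 2 ≤ L
  have he2 : Real.exp 2 ≤ 7.5 := by
    have h := Real.exp_one_lt_d9
    have h2 : Real.exp 2 = Real.exp 1 * Real.exp 1 := by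
      rw [← Real.exp_add]; norm_num
    nlinarith [Real.exp_pos 1]
  have hLge2 : 2 ≤ L := by
    rw [hL]
    have h75 : (7.5:ℝ) ≤ Real.pi / 4 * x := by nlinarith
    calc (2:ℝ) = Real.log (Real.exp 2) := (Real.log_exp 2).symm
    _ ≤ Real.log (Real.pi / 4 * x) :=
        Real.log_le_log (Real.exp_pos 2) (le_trans he2 h75)
  have ht : 2 / x ≤ L / x := by gcongr
  -- main estimate
  have hE := Real.add_one_le_exp (L / x)
  have h23 : (2/3) * Real.exp (3 * (L / x)) / x ^ 2 ≤ (2/3) / x := by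
    calc (2/3) * Real.exp (3 * (L / x)) / x ^ 2 ≤ (2/3) * x / x ^ 2 := by
          gcongr
    _ = (2/3) / x := by field_simp
  have hfrac : (2/3) / x ≤ 1 / x := by gcongr; norm_num
  have h2x : 2 / x = 1 / x + 1 / x := by ring
  rw [ge_iff_le, h1, mul_assoc, h3]
  linarith
end

section
/- For every positive integer n, 4·( ((n/2)!)² / n! )^(1/n) ≥ 2n·arcsin((2n−1)/(n² + (n−1)²)), where (n/2)! = Γ(n/2+1). -/
open Real

/-- arcsin bound via tangent. -/
lemma arcsin_le_div_sqrt {x : ℝ} (hx : 0 ≤ x) (hx1 : x < 1) :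
    Real.arcsin x ≤ x / Real.sqrt (1 - x ^ 2) := by
  rcases eq_or_lt_of_le hx with h | h
  · simp [← h]
  · have h1 : 0 < Real.arcsin x := Real.arcsin_pos.2 h
    have h2 : Real.arcsin x < π / 2 := Real.arcsin_lt_pi_div_two.2 hx1
    have := Real.lt_tan h1 h2
    rw [Real.tan_arcsin] at this
    exact this.le

noncomputable def Bfun (n : ℕ) : ℝ :=
  4 ^ n * Real.Gamma ((n : ℝ) / 2 + 1) ^ 2 / n.factorial

lemma Bfun_pos (n : ℕ) : 0 < Bfun n := by
  have h1 : 0 < Real.Gamma ((n : ℝ) / 2 + 1) :=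
    Real.Gamma_pos_of_pos (by positivity)
  have h2 : (0 : ℝ) < n.factorial := by exact_mod_cast n.factorial_pos
  unfold Bfun
  positivity

lemma Bfun_rec (n : ℕ) : Bfun (n + 2) = Bfun n * (4 * (n + 2) / (n + 1)) := by
  have hne : ((n : ℝ) / 2 + 1) ≠ 0 := by positivity
  have hΓ : Real.Gamma (((n : ℕ) + 2 : ℕ) / 2 + 1)
      = ((n : ℝ) / 2 + 1) * Real.Gamma ((n : ℝ) / 2 + 1) := by
    have : (((n : ℕ) + 2 : ℕ) : ℝ) / 2 + 1 = ((n : ℝ) / 2 + 1) + 1 := by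
      push_cast; ring
    rw [this, Real.Gamma_add_one hne]
  have hfac : ((n + 2).factorial : ℝ) = (n + 2) * (n + 1) * n.factorial := by
    push_cast [Nat.factorial_succ]
    ring
  have h2 : (0 : ℝ) < n.factorial := by exact_mod_cast n.factorial_pos
  have hn1 : (0 : ℝ) < (n : ℝ) + 1 := by positivity
  have hn2 : (0 : ℝ) < (n : ℝ) + 2 := by positivity
  unfold Bfun
  rw [hΓ, hfac]
  field_simp
  ring

lemma exp_34_lt : Real.exp (3 / 4) < 2.12 := by
  have h4 : Real.exp (3 / 4) ^ (4 : ℕ) = Real.exp 1 ^ (3 : ℕ) := by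
    rw [← Real.exp_nat_mul, ← Real.exp_nat_mul]; norm_num
  have he := Real.exp_one_lt_d9
  have hp : (0 : ℝ) < Real.exp 1 := Real.exp_pos 1
  have hc : Real.exp 1 ^ (3 : ℕ) < (2.7182818286 : ℝ) ^ (3 : ℕ) :=
    pow_lt_pow_left₀ he hp.le (by norm_num)
  have h3 : Real.exp (3 / 4) ^ (4 : ℕ) < (2.12 : ℝ) ^ (4 : ℕ) := by
    rw [h4]; nlinarith
  exact lt_of_pow_lt_pow_left₀ 4 (by norm_num) h3

lemma Bfun_ge (n : ℕ) (hn : 3 ≤ n) : 2 ^ n * Real.exp (3 / 4) ≤ Bfun n := by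
  induction n using Nat.strong_induction_on with
  | _ n ih =>
    match n, hn with
    | 3, _ =>
      have hΓ : Real.Gamma ((3 : ℕ) / 2 + 1 : ℝ) = 3 / 4 * Real.sqrt π := by
        have e1 : ((3 : ℕ) : ℝ) / 2 + 1 = (3 / 2 : ℝ) + 1 := by norm_num
        have e2 : (3 / 2 : ℝ) = (1 / 2 : ℝ) + 1 := by norm_num
        rw [e1, Real.Gamma_add_one (by norm_num), e2,
          Real.Gamma_add_one (by norm_num), Real.Gamma_one_half_eq]
        ring
      have hsq : Real.sqrt π ^ 2 = π := Real.sq_sqrt pi_pos.le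
      have hpi : (3.14159 : ℝ) < π := by
        have := Real.pi_gt_d6; linarith
      have hE := exp_34_lt
      unfold Bfun
      rw [hΓ]
      norm_num [Nat.factorial]
      nlinarith
    | 4, _ =>
      have hΓ : Real.Gamma ((4 : ℕ) / 2 + 1 : ℝ) = 2 := by
        have e1 : ((4 : ℕ) : ℝ) / 2 + 1 = (2 : ℝ) + 1 := by norm_num
        rw [e1, Real.Gamma_add_one (by norm_num), Real.Gamma_two]
        ring
      have hE := exp_34_lt
      unfold Bfun
      rw [hΓ]
      norm_num [Nat.factorial]
      nlinarith
    | (m + 5), _ =>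
      have h1 := ih (m + 3) (by omega) (by omega)
      have h2 : Bfun (m + 5) = Bfun (m + 3) * (4 * ((m + 3 : ℕ) + 2) / ((m + 3 : ℕ) + 1)) := Bfun_rec (m + 3)
      have hm1 : (0 : ℝ) < (m : ℝ) + 4 := by positivity
      have hfac : (4 : ℝ) ≤ 4 * ((m : ℝ) + 5) / ((m : ℝ) + 4) := by
        rw [le_div_iff₀ hm1]; ring_nf; linarith
      have hB3 : 0 < Bfun (m + 3) := Bfun_pos _
      have hE : 0 < Real.exp (3 / 4) := Real.exp_pos _
      have : 2 ^ (m + 5) * Real.exp (3 / 4) = 4 * (2 ^ (m + 3) * Real.exp (3 / 4)) := by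
        ring
      rw [this, h2]
      push_cast
      calc 4 * (2 ^ (m + 3) * Real.exp (3 / 4)) ≤ 4 * Bfun (m + 3) := by nlinarith
        _ ≤ Bfun (m + 3) * (4 * ((m : ℝ) + 3 + 2) / ((m : ℝ) + 3 + 1)) := by
            rw [mul_comm 4 (Bfun (m + 3))]
            have : (m : ℝ) + 3 + 2 = (m : ℝ) + 5 := by ring
            rw [this]
            have : (m : ℝ) + 3 + 1 = (m : ℝ) + 4 := by ring
            rw [this]
            exact mul_le_mul_of_nonneg_left hfac hB3.le

theorem stmt_14 (n : ℕ) (hn : 0 < n) :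
    4 * (Real.Gamma ((n : ℝ) / 2 + 1) ^ 2 / (Nat.factorial n : ℝ)) ^ ((1 : ℝ) / n)
      ≥ 2 * n * Real.arcsin ((2 * (n : ℝ) - 1) / ((n : ℝ) ^ 2 + ((n : ℝ) - 1) ^ 2)) := by
  obtain rfl | rfl | hn3 : n = 1 ∨ n = 2 ∨ 3 ≤ n := by omega
  · -- n = 1
    have hΓ : Real.Gamma (((1 : ℕ) : ℝ) / 2 + 1) = Real.sqrt π / 2 := by
      have e1 : ((1 : ℕ) : ℝ) / 2 + 1 = (1 / 2 : ℝ) + 1 := by norm_num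
      rw [e1, Real.Gamma_add_one (by norm_num), Real.Gamma_one_half_eq]
      ring
    have harg : (2 * ((1 : ℕ) : ℝ) - 1) / (((1 : ℕ) : ℝ) ^ 2 + (((1 : ℕ) : ℝ) - 1) ^ 2)
        = 1 := by norm_num
    have hexp : ((1 : ℝ) / ((1 : ℕ) : ℝ)) = 1 := by norm_num
    rw [hΓ, harg, hexp, Real.arcsin_one, Real.rpow_one]
    have hsq : Real.sqrt π ^ 2 = π := Real.sq_sqrt pi_pos.le
    have : (Real.sqrt π / 2) ^ 2 / ((Nat.factorial 1 : ℕ) : ℝ) = π / 4 := by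
      rw [Nat.factorial]
      norm_num
      nlinarith
    rw [this]
    push_cast
    ring_nf
    linarith
  · -- n = 2
    have hΓ : Real.Gamma (((2 : ℕ) : ℝ) / 2 + 1) = 1 := by
      have e1 : ((2 : ℕ) : ℝ) / 2 + 1 = (2 : ℝ) := by norm_num
      rw [e1, Real.Gamma_two]
    have harg : (2 * ((2 : ℕ) : ℝ) - 1) / (((2 : ℕ) : ℝ) ^ 2 + (((2 : ℕ) : ℝ) - 1) ^ 2)
        = 3 / 5 := by norm_num
    have hexp : ((1 : ℝ) / ((2 : ℕ) : ℝ)) = 1 / 2 := by norm_num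
    rw [hΓ, harg, hexp]
    have hfac : ((Nat.factorial 2 : ℕ) : ℝ) = 2 := by norm_num [Nat.factorial]
    rw [hfac]
    have hhalf : ((1 : ℝ) ^ 2 / 2) = 1 / 2 := by norm_num
    rw [hhalf, ← Real.sqrt_eq_rpow]
    set s := Real.sqrt (1 / 2) with hs
    have hs2 : s ^ 2 = 1 / 2 := Real.sq_sqrt (by norm_num)
    have hs0 : 0 ≤ s := Real.sqrt_nonneg _
    have hs0' : 0 < s := by nlinarith
    have hs1 : s ≤ 1 := by nlinarith
    have hsin := Real.sin_gt_sub_cube hs0'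
    have h35 : (3 : ℝ) / 5 ≤ Real.sin s := by nlinarith [sq_nonneg (s - 24 / 35)]
    have hpi2 : s ≤ π / 2 := by
      have := Real.pi_gt_d6
      linarith
    have harc : Real.arcsin (3 / 5) ≤ s := by
      calc Real.arcsin (3 / 5) ≤ Real.arcsin (Real.sin s) := Real.monotone_arcsin h35
        _ = s := Real.arcsin_sin (by linarith) hpi2
    push_cast
    nlinarith
  · -- 3 ≤ n
    have hN : (3 : ℝ) ≤ (n : ℝ) := by exact_mod_cast hn3
    set N := (n : ℝ) with hNdef
    have hD : (0 : ℝ) < N ^ 2 + (N - 1) ^ 2 := by nlinarith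
    set x := (2 * N - 1) / (N ^ 2 + (N - 1) ^ 2) with hx
    have hx0 : 0 ≤ x := by
      apply div_nonneg _ hD.le
      linarith
    have hx1 : x < 1 := by
      rw [hx, div_lt_one hD]
      nlinarith
    have hsqrt : Real.sqrt (1 - x ^ 2) = 2 * N * (N - 1) / (N ^ 2 + (N - 1) ^ 2) := by
      have h1x : 1 - x ^ 2 = (2 * N * (N - 1) / (N ^ 2 + (N - 1) ^ 2)) ^ 2 := by
        rw [hx]
        field_simp
        ring
      have hnn : (0 : ℝ) ≤ 2 * N * (N - 1) / (N ^ 2 + (N - 1) ^ 2) := by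
        apply div_nonneg _ hD.le
        nlinarith
      rw [h1x, Real.sqrt_sq hnn]
    have hN1 : (0 : ℝ) < N - 1 := by linarith
    have hN1' : N - 1 ≠ 0 := hN1.ne'
    have hNne : N ≠ 0 := by linarith
    have hDne : N ^ 2 + (N - 1) ^ 2 ≠ 0 := hD.ne'
    have hratio : x / Real.sqrt (1 - x ^ 2) = (2 * N - 1) / (2 * N * (N - 1)) := by
      rw [hsqrt, hx]
      field_simp
    have harc : Real.arcsin x ≤ (2 * N - 1) / (2 * N * (N - 1)) := by
      rw [← hratio]
      exact arcsin_le_div_sqrt hx0 hx1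
    set c := (2 * N - 1) / (N - 1) with hc
    have hc0 : 0 ≤ c := by
      apply div_nonneg <;> linarith
    have hRHS : 2 * N * Real.arcsin x ≤ c := by
      have h2N : (0 : ℝ) < 2 * N := by linarith
      have := mul_le_mul_of_nonneg_left harc h2N.le
      have heq : 2 * N * ((2 * N - 1) / (2 * N * (N - 1))) = c := by
        rw [hc]
        field_simp
      linarith [heq ▸ this]
    -- now the LHS bound
    set t := 1 / (2 * (N - 1)) with ht
    have ht0 : 0 ≤ t := by
      rw [ht]
      positivity
    have hct : c = 2 * (1 + t) := by
      rw [hc, ht]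
      field_simp
      ring
    have h1t : (1 + t) ^ n ≤ Real.exp (3 / 4) := by
      have he1 : (1 + t) ^ n ≤ Real.exp t ^ n := by
        apply pow_le_pow_left₀ (by linarith)
        linarith [Real.add_one_le_exp t]
      have he2 : Real.exp t ^ n = Real.exp (n * t) := (Real.exp_nat_mul t n).symm
      have he3 : (n : ℝ) * t ≤ 3 / 4 := by
        rw [ht, mul_one_div, div_le_iff₀ (by linarith)]
        linarith
      calc (1 + t) ^ n ≤ Real.exp (n * t) := by rw [← he2]; exact he1
        _ ≤ Real.exp (3 / 4) := Real.exp_le_exp.2 he3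
    have hcn : c ^ n ≤ Bfun n := by
      calc c ^ n = 2 ^ n * (1 + t) ^ n := by rw [hct, mul_pow]
        _ ≤ 2 ^ n * Real.exp (3 / 4) := by
            apply mul_le_mul_of_nonneg_left h1t
            positivity
        _ ≤ Bfun n := Bfun_ge n hn3
    set A := Real.Gamma (N / 2 + 1) ^ 2 / (Nat.factorial n : ℝ) with hA
    have hApos : 0 < A := by
      have h1 : 0 < Real.Gamma (N / 2 + 1) := Real.Gamma_pos_of_pos (by positivity)
      have h2 : (0 : ℝ) < (Nat.factorial n : ℝ) := by exact_mod_cast n.factorial_pos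
      positivity
    have hBA : Bfun n = 4 ^ n * A := by
      rw [hA]
      unfold Bfun
      rw [hNdef]
      ring
    have hnne : (n : ℝ) ≠ 0 := by positivity
    have e1 : (c ^ n : ℝ) ^ ((1 : ℝ) / n) = c := by
      rw [← Real.rpow_natCast c n, ← Real.rpow_mul hc0, mul_one_div, div_self hnne,
        Real.rpow_one]
    have e4 : ((4 : ℝ) ^ n) ^ ((1 : ℝ) / n) = 4 := by
      rw [← Real.rpow_natCast 4 n, ← Real.rpow_mul (by norm_num), mul_one_div,
        div_self hnne, Real.rpow_one]
    have e2 : (Bfun n) ^ ((1 : ℝ) / n) = 4 * A ^ ((1 : ℝ) / n) := by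
      rw [hBA, Real.mul_rpow (by positivity) hApos.le, e4]
    have e3 : (c ^ n : ℝ) ^ ((1 : ℝ) / n) ≤ (Bfun n) ^ ((1 : ℝ) / n) :=
      Real.rpow_le_rpow (by positivity) hcn (by positivity)
    rw [e1, e2] at e3
    exact le_trans hRHS e3
end
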